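/- If K ≤ a ≤ U in the sense that a ∈ C_b(X) takes values in [0,1], a = 1 on the compact set K and supp(a) ⊆ the open set U, then for any quasi-measure μ on X: μ(K) ≤ μ(a) ≤ μ(U), where μ(a) is the quasi-integral. -/

import Mathlib

open Set MeasureTheory BoundedContinuousFunction Filter Topology

/-- An *image* is a set that is either open or closed. -/
def IsImage {X : Type*} [TopologicalSpace X] (A : Set X) : Prop := IsOpen A ∨ IsClosed A

/-- A (normalized, additive, compact-regular) quasi-measure on the images of `X`. -/
structure IsQuasiMeasure {X : Type*} [TopologicalSpace X] (μ : Set X → ℝ) : Prop where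
  nonneg : ∀ A : Set X, IsImage A → 0 ≤ μ A
  normalized : μ Set.univ = 1
  additive : ∀ A B : Set X, IsImage A → IsImage B → IsImage (A ∪ B) → Disjoint A B →
    μ (A ∪ B) = μ A + μ B
  regular : ∀ U : Set X, IsOpen U →
    IsLUB {r : ℝ | ∃ K : Set X, IsCompact K ∧ K ⊆ U ∧ μ K = r} (μ U)

/-- A quasi-measure is simple if it only takes the values 0 and 1. -/
def IsSimpleQM {X : Type*} [TopologicalSpace X] (μ : Set X → ℝ) : Prop :=
  ∀ A : Set X, IsImage A → μ A = 0 ∨ μ A = 1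

/-- Membership in the singly generated algebra `A(c) = {φ ∘ c : φ ∈ C(ℝ,ℝ)}`. -/
def InAlg {X : Type*} [TopologicalSpace X] (c f : X →ᵇ ℝ) : Prop :=
  ∃ φ : C(ℝ, ℝ), ∀ x, f x = φ (c x)

-- The quasi-integral of `a` with respect to `μ`: `∫ t dμ_a(t)` where `μ_a`
-- is the Borel probability measure extending `μ ∘ a⁻¹` (if it exists).
open Classical in
noncomputable def qint {X : Type*} [TopologicalSpace X] (μ : Set X → ℝ) (a : X →ᵇ ℝ) : ℝ :=
  if h : ∃ ν : MeasureTheory.Measure ℝ, MeasureTheory.IsProbabilityMeasure ν ∧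
      ∀ A : Set ℝ, IsImage A → ν A = ENNReal.ofReal (μ (a ⁻¹' A))
  then ∫ t, t ∂ h.choose else 0

/-- An image-transformation from `X` to `Y`. -/
structure IsImageTransformation {X Y : Type*} [TopologicalSpace X] [TopologicalSpace Y]
    (q : Set X → Set Y) : Prop where
  image : ∀ A : Set X, IsImage A → IsImage (q A)
  top : q Set.univ = Set.univ
  openMap : ∀ U : Set X, IsOpen U → IsOpen (q U)
  additive : ∀ A B : Set X, IsImage A → IsImage B → IsImage (A ∪ B) → Disjoint A B →
    q (A ∪ B) = q A ∪ q B ∧ Disjoint (q A) (q B)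
  regular : ∀ U : Set X, IsOpen U → ∀ K : Set Y, IsCompact K → K ⊆ q U →
    ∃ L : Set X, IsCompact L ∧ L ⊆ U ∧ K ⊆ q L

/-! Along a single continuous function `a`, a quasi-measure behaves like a measure. Inner
regularity makes `t ↦ μ {a ≤ t}` right continuous, since a compact subset of `{a > t}` lies in
some `{a > s}` with `s > t`; its Lebesgue–Stieltjes measure agrees with `μ ∘ a⁻¹` on open sets,
because a compact subset of an open set of `ℝ` is covered, inside that set, by finitely many
disjoint open intervals, on whose preimages `μ` is additive. So `μ_a` exists; it lives on `[0,1]`,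
where `𝟙_{1} ≤ t ≤ 𝟙_{(0,∞)}`, whence `μ(a⁻¹{1}) ≤ μ(a) ≤ μ(a⁻¹(0,∞))`. Finally
`K ⊆ a⁻¹{1}` are closed (`X` is Hausdorff) and `a⁻¹(0,∞) ⊆ U` are open. -/

theorem IsImage.compl {X : Type*} [TopologicalSpace X] {A : Set X} (hA : IsImage A) :
    IsImage Aᶜ :=
  hA.elim (fun h => Or.inr h.isClosed_compl) (fun h => Or.inl h.isOpen_compl)

theorem IsImage.preimage {X Y : Type*} [TopologicalSpace X] [TopologicalSpace Y] {f : X → Y}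
    {A : Set Y} (hA : IsImage A) (hf : Continuous f) : IsImage (f ⁻¹' A) :=
  hA.imp (·.preimage hf) (·.preimage hf)

namespace IsQuasiMeasure

variable {X : Type*} [TopologicalSpace X] {μ : Set X → ℝ} (hμ : IsQuasiMeasure μ)
include hμ

theorem empty : μ ∅ = 0 := by
  have h := hμ.additive ∅ ∅ (Or.inl isOpen_empty) (Or.inl isOpen_empty)
    (by simp [IsImage]) disjoint_bot_left
  simp only [union_empty] at h
  linarith

theorem add_compl {A : Set X} (hA : IsImage A) : μ A + μ Aᶜ = 1 := by
  rw [← hμ.additive A Aᶜ hA hA.compl (by simp [IsImage]) disjoint_compl_right,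
    union_compl_self, hμ.normalized]

theorem le_of_isCompact_subset {K U : Set X} (hK : IsCompact K) (hU : IsOpen U) (h : K ⊆ U) :
    μ K ≤ μ U :=
  (hμ.regular U hU).1 ⟨K, hK, h, rfl⟩

theorem exists_isCompact_lt {U : Set X} (hU : IsOpen U) {r : ℝ} (hr : r < μ U) :
    ∃ L, IsCompact L ∧ L ⊆ U ∧ r < μ L := by
  obtain ⟨_, ⟨L, hL, hLU, rfl⟩, hrL, -⟩ := (hμ.regular U hU).exists_between hr
  exact ⟨L, hL, hLU, hrL⟩

theorem mono_isOpen {V U : Set X} (hV : IsOpen V) (hU : IsOpen U) (h : V ⊆ U) : μ V ≤ μ U :=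
  (hμ.regular V hV).2 <| by
    rintro _ ⟨K, hK, hKV, rfl⟩
    exact hμ.le_of_isCompact_subset hK hU (hKV.trans h)

theorem mono_isClosed {C D : Set X} (hC : IsClosed C) (hD : IsClosed D) (h : C ⊆ D) :
    μ C ≤ μ D := by
  have hCc := hμ.add_compl (Or.inr hC)
  have hDc := hμ.add_compl (Or.inr hD)
  have := hμ.mono_isOpen hD.isOpen_compl hC.isOpen_compl (compl_subset_compl.2 h)
  linarith

theorem le_of_subset_of_isImage_diff {A B : Set X} (hA : IsImage A) (hB : IsImage B)
    (hBA : IsImage (B \ A)) (h : A ⊆ B) : μ A ≤ μ B := by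
  have hadd := hμ.additive A (B \ A) hA hBA (by rwa [union_sdiff_cancel h]) disjoint_sdiff_right
  rw [union_sdiff_cancel h] at hadd
  linarith [hμ.nonneg _ hBA]

theorem le_of_isClosed_subset_isOpen {C V : Set X} (hC : IsClosed C) (hV : IsOpen V)
    (h : C ⊆ V) : μ C ≤ μ V :=
  hμ.le_of_subset_of_isImage_diff (Or.inr hC) (Or.inl hV) (Or.inl (hV.sdiff hC)) h

theorem le_of_isOpen_subset_isClosed {V C : Set X} (hV : IsOpen V) (hC : IsClosed C)
    (h : V ⊆ C) : μ V ≤ μ C :=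
  hμ.le_of_subset_of_isImage_diff (Or.inl hV) (Or.inr hC) (Or.inr (hC.sdiff hV)) h

theorem biUnion_finset {ι : Type*} {s : Finset ι} {V : ι → Set X} (hV : ∀ i ∈ s, IsOpen (V i))
    (hdisj : (s : Set ι).PairwiseDisjoint V) : μ (⋃ i ∈ s, V i) = ∑ i ∈ s, μ (V i) := by
  classical
  induction s using Finset.induction_on with
  | empty => simpa using hμ.empty
  | @insert i s hi ih =>
    rw [Finset.set_biUnion_insert, Finset.sum_insert hi]
    have hVi : IsOpen (V i) := hV i (Finset.mem_insert_self i s)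
    have hVs : IsOpen (⋃ j ∈ s, V j) :=
      isOpen_biUnion fun j hj => hV j (Finset.mem_insert_of_mem hj)
    have hd : Disjoint (V i) (⋃ j ∈ s, V j) :=
      disjoint_iUnion₂_right.2 fun j hj => hdisj (Finset.mem_insert_self i s)
        (Finset.mem_insert_of_mem hj) (ne_of_mem_of_not_mem hj hi).symm
    rw [hμ.additive _ _ (Or.inl hVi) (Or.inl hVs) (Or.inl (hVi.union hVs)) hd,
      ih (fun j hj => hV j (Finset.mem_insert_of_mem hj))
        (hdisj.subset (Finset.coe_subset.2 (Finset.subset_insert i s)))]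

end IsQuasiMeasure

theorem exists_pairwiseDisjoint_Ioo_biUnion_eq (s : Finset (ℝ × ℝ)) :
    ∃ t : Finset (ℝ × ℝ), (t : Set (ℝ × ℝ)).PairwiseDisjoint (fun p => Ioo p.1 p.2) ∧
      ⋃ p ∈ t, Ioo p.1 p.2 = ⋃ p ∈ s, Ioo p.1 p.2 := by
  classical
  induction hn : s.card using Nat.strong_induction_on generalizing s with
  | _ n ih =>
  by_cases hs : (s : Set (ℝ × ℝ)).PairwiseDisjoint (fun p => Ioo p.1 p.2)
  · exact ⟨s, hs, rfl⟩
  obtain ⟨x, hx, y, hy, hxy, hxy'⟩ :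
      ∃ x ∈ s, ∃ y ∈ s, x ≠ y ∧ ¬Disjoint (Ioo x.1 x.2) (Ioo y.1 y.2) := by
    simpa [Set.PairwiseDisjoint, Set.Pairwise, Function.onFun] using hs
  obtain ⟨z, hzx, hzy⟩ := not_disjoint_iff.1 hxy'
  -- Two overlapping intervals are replaced by their union, which is again an interval.
  have hmerge : Ioo x.1 x.2 ∪ Ioo y.1 y.2 = Ioo (min x.1 y.1) (max x.2 y.2) :=
    Ioo_union_Ioo' (hzy.1.trans hzx.2) (hzx.1.trans hzy.2)
  set r := (s.erase x).erase y
  have hs_eq : s = insert x (insert y r) := by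
    rw [Finset.insert_erase (Finset.mem_erase.2 ⟨hxy.symm, hy⟩), Finset.insert_erase hx]
  have hcard : (insert (min x.1 y.1, max x.2 y.2) r).card < n := by
    have hr : r.card + 2 = s.card := by
      rw [hs_eq, Finset.card_insert_of_notMem (by simp [r, hxy]),
        Finset.card_insert_of_notMem (Finset.notMem_erase _ _)]
    have := Finset.card_insert_le (min x.1 y.1, max x.2 y.2) r
    omega
  obtain ⟨t, ht, hts⟩ := ih _ hcard _ rfl
  refine ⟨t, ht, hts.trans ?_⟩
  conv_rhs => rw [hs_eq]
  simp only [Finset.set_biUnion_insert, ← union_assoc, hmerge]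

theorem IsCompact.exists_pairwiseDisjoint_Ioo_cover {C A : Set ℝ} (hC : IsCompact C)
    (hA : IsOpen A) (hCA : C ⊆ A) :
    ∃ t : Finset (ℝ × ℝ), (t : Set (ℝ × ℝ)).PairwiseDisjoint (fun p => Ioo p.1 p.2) ∧
      C ⊆ ⋃ p ∈ t, Ioo p.1 p.2 ∧ ⋃ p ∈ t, Ioo p.1 p.2 ⊆ A := by
  obtain ⟨b, hbA, hb, hCb⟩ := hC.elim_finite_subcover_image
    (b := {p : ℝ × ℝ | Ioo p.1 p.2 ⊆ A}) (c := fun p => Ioo p.1 p.2) (fun _ _ => isOpen_Ioo)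
    fun x hx => by
      obtain ⟨l, u, hx, hlu⟩ := (mem_nhds_iff_exists_Ioo_subset).1 (hA.mem_nhds (hCA hx))
      exact mem_biUnion (x := (l, u)) hlu hx
  obtain ⟨t, ht, hts⟩ := exists_pairwiseDisjoint_Ioo_biUnion_eq hb.toFinset
  refine ⟨t, ht, ?_, ?_⟩ <;> rw [hts] <;> simp only [Set.Finite.mem_toFinset]
  · exact hCb
  · exact iUnion₂_subset fun p hp => hbA hp

/-- `ν` is the distribution `μ_a` of `a` under `μ`. -/
structure IsDistribution {X : Type*} [TopologicalSpace X] (μ : Set X → ℝ) (a : X →ᵇ ℝ)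
    (ν : Measure ℝ) : Prop where
  isProbabilityMeasure : IsProbabilityMeasure ν
  apply_eq : ∀ A : Set ℝ, IsImage A → ν A = ENNReal.ofReal (μ (a ⁻¹' A))

namespace IsQuasiMeasure

variable {X : Type*} [TopologicalSpace X] {μ : Set X → ℝ} (hμ : IsQuasiMeasure μ) (a : X →ᵇ ℝ)
include hμ

theorem monotone_preimage_Iic : Monotone fun t => μ (a ⁻¹' Iic t) := fun _ _ hst =>
  hμ.mono_isClosed (isClosed_Iic.preimage a.continuous) (isClosed_Iic.preimage a.continuous)
    (preimage_mono (Iic_subset_Iic.2 hst))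

theorem preimage_Iic_eq_one_sub (t : ℝ) : μ (a ⁻¹' Iic t) = 1 - μ (a ⁻¹' Ioi t) := by
  have h := hμ.add_compl (Or.inr (isClosed_Iic.preimage a.continuous) : IsImage (a ⁻¹' Iic t))
  rw [← preimage_compl, compl_Iic] at h
  linarith

theorem exists_gt_preimage_Iic_lt (x : ℝ) {ε : ℝ} (hε : 0 < ε) :
    ∃ s > x, μ (a ⁻¹' Iic s) < μ (a ⁻¹' Iic x) + ε := by
  obtain ⟨L, hL, hLx, hεL⟩ := hμ.exists_isCompact_lt (isOpen_Ioi.preimage a.continuous)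
    (sub_lt_self (μ (a ⁻¹' Ioi x)) hε)
  obtain ⟨s, hxs, hsL⟩ := hL.exists_forall_le' a.continuous.continuousOn hLx
  obtain ⟨s', hxs', hs's⟩ := exists_between hxs
  have hLs' : μ L ≤ μ (a ⁻¹' Ioi s') := hμ.le_of_isCompact_subset hL
    (isOpen_Ioi.preimage a.continuous) fun y hy => hs's.trans_le (hsL y hy)
  refine ⟨s', hxs', ?_⟩
  rw [hμ.preimage_Iic_eq_one_sub, hμ.preimage_Iic_eq_one_sub]
  linarith

def distribFun : StieltjesFunction ℝ where
  toFun t := μ (a ⁻¹' Iic t)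
  mono' := hμ.monotone_preimage_Iic a
  right_continuous' x := by
    refine tendsto_order.2 ⟨fun b hb => ?_, fun b hb => ?_⟩
    · exact eventually_mem_nhdsWithin.mono fun t ht =>
        hb.trans_le (hμ.monotone_preimage_Iic a ht)
    · obtain ⟨s, hxs, hs⟩ := hμ.exists_gt_preimage_Iic_lt a x (sub_pos.2 hb)
      exact eventually_of_mem (Ico_mem_nhdsGE hxs) fun t ht =>
        (hμ.monotone_preimage_Iic a ht.2.le).trans_lt (by linarith)

theorem distribFun_apply (t : ℝ) : hμ.distribFun a t = μ (a ⁻¹' Iic t) := rfl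

theorem leftLim_distribFun (q : ℝ) :
    Function.leftLim (hμ.distribFun a) q = μ (a ⁻¹' Iio q) := by
  rw [(hμ.distribFun a).mono.leftLim_eq_sSup]
  refine IsLUB.csSup_eq ⟨?_, fun b hb => (hμ.regular _ (isOpen_Iio.preimage a.continuous)).2 ?_⟩
    ((nonempty_Iio (a := q)).image _)
  · rintro _ ⟨s, hsq, rfl⟩
    exact hμ.le_of_isClosed_subset_isOpen (isClosed_Iic.preimage a.continuous)
      (isOpen_Iio.preimage a.continuous) (preimage_mono (Iic_subset_Iio.2 hsq))
  · rintro _ ⟨L, hL, hLq, rfl⟩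
    obtain ⟨s, hsq, hsL⟩ := hL.exists_forall_le' (f := fun x => -a x)
      a.continuous.neg.continuousOn (a := -q) fun y hy => neg_lt_neg (hLq hy)
    calc μ L ≤ μ (a ⁻¹' Iio (-s / 2 + q / 2)) :=
          hμ.le_of_isCompact_subset hL (isOpen_Iio.preimage a.continuous) fun y hy => by
            have := hsL y hy
            simp only [mem_preimage, mem_Iio]
            linarith
      _ ≤ μ (a ⁻¹' Iic (-s / 2 + q / 2)) :=
          hμ.le_of_isOpen_subset_isClosed (isOpen_Iio.preimage a.continuous)
            (isClosed_Iic.preimage a.continuous) (preimage_mono Iio_subset_Iic_self)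
      _ ≤ b := hb ⟨_, by simp only [mem_Iio]; linarith, rfl⟩

theorem isProbabilityMeasure_distribFun : IsProbabilityMeasure (hμ.distribFun a).measure := by
  refine (hμ.distribFun a).isProbabilityMeasure (tendsto_const_nhds.congr' ?_)
    (tendsto_const_nhds.congr' ?_)
  · filter_upwards [eventually_lt_atBot (-‖a‖)] with t ht
    rw [distribFun_apply, eq_comm, ← hμ.empty]
    congr 1
    exact eq_empty_of_forall_notMem fun x hx =>
      (neg_le_of_abs_le (a.norm_coe_le_norm x)).not_gt (lt_of_le_of_lt hx ht)
  · filter_upwards [eventually_ge_atTop ‖a‖] with t ht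
    rw [distribFun_apply, eq_comm, ← hμ.normalized]
    congr 1
    exact eq_univ_of_forall fun x => (le_abs_self _).trans ((a.norm_coe_le_norm x).trans ht)

theorem distribFun_measure_Ioo (p q : ℝ) :
    (hμ.distribFun a).measure (Ioo p q) = ENNReal.ofReal (μ (a ⁻¹' Ioo p q)) := by
  rw [StieltjesFunction.measure_Ioo, leftLim_distribFun, distribFun_apply]
  rcases le_or_gt q p with hqp | hpq
  · rw [Ioo_eq_empty hqp.not_gt, preimage_empty, hμ.empty, ENNReal.ofReal_zero,
      ENNReal.ofReal_eq_zero, sub_nonpos]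
    exact hμ.le_of_isOpen_subset_isClosed (isOpen_Iio.preimage a.continuous)
      (isClosed_Iic.preimage a.continuous) (preimage_mono (Iio_subset_Iic_self.trans
        (Iic_subset_Iic.2 hqp)))
  · have h := hμ.additive (a ⁻¹' Iic p) (a ⁻¹' Ioo p q)
      (Or.inr (isClosed_Iic.preimage a.continuous)) (Or.inl (isOpen_Ioo.preimage a.continuous))
      (by rw [← preimage_union, Iic_union_Ioo_eq_Iio hpq]
          exact Or.inl (isOpen_Iio.preimage a.continuous))
      ((Iic_disjoint_Ioi le_rfl).mono_right Ioo_subset_Ioi_self |>.preimage a)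
    rw [← preimage_union, Iic_union_Ioo_eq_Iio hpq] at h
    rw [h, add_sub_cancel_left]

theorem distribFun_measure_biUnion_Ioo {t : Finset (ℝ × ℝ)}
    (ht : (t : Set (ℝ × ℝ)).PairwiseDisjoint (fun p => Ioo p.1 p.2)) :
    (hμ.distribFun a).measure (⋃ p ∈ t, Ioo p.1 p.2) =
      ENNReal.ofReal (μ (a ⁻¹' ⋃ p ∈ t, Ioo p.1 p.2)) := by
  rw [measure_biUnion_finset ht fun _ _ => measurableSet_Ioo, preimage_iUnion₂,
    hμ.biUnion_finset (fun _ _ => isOpen_Ioo.preimage a.continuous)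
      fun _ hp _ hq hpq => (ht hp hq hpq).preimage a,
    ENNReal.ofReal_sum_of_nonneg fun _ _ =>
      hμ.nonneg _ (Or.inl (isOpen_Ioo.preimage a.continuous))]
  exact Finset.sum_congr rfl fun p _ => hμ.distribFun_measure_Ioo a p.1 p.2

theorem distribFun_measure_of_isOpen {A : Set ℝ} (hA : IsOpen A) :
    (hμ.distribFun a).measure A = ENNReal.ofReal (μ (a ⁻¹' A)) := by
  have := hμ.isProbabilityMeasure_distribFun a
  have hsandwich : ∀ C : Set ℝ, IsCompact C → C ⊆ A → ∃ W : Set ℝ, IsOpen W ∧ C ⊆ W ∧ W ⊆ A ∧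
      (hμ.distribFun a).measure W = ENNReal.ofReal (μ (a ⁻¹' W)) := fun C hC hCA => by
    obtain ⟨t, ht, hCt, htA⟩ := hC.exists_pairwiseDisjoint_Ioo_cover hA hCA
    exact ⟨_, isOpen_biUnion fun _ _ => isOpen_Ioo, hCt, htA,
      hμ.distribFun_measure_biUnion_Ioo a ht⟩
  refine le_antisymm (le_of_forall_lt fun r hr => ?_) ?_
  · obtain ⟨C, hCA, hC, hrC⟩ := hA.exists_lt_isCompact hr
    obtain ⟨W, hW, hCW, hWA, hWeq⟩ := hsandwich C hC hCA
    calc r < (hμ.distribFun a).measure W := hrC.trans_le (measure_mono hCW)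
      _ = ENNReal.ofReal (μ (a ⁻¹' W)) := hWeq
      _ ≤ ENNReal.ofReal (μ (a ⁻¹' A)) := ENNReal.ofReal_le_ofReal <|
          hμ.mono_isOpen (hW.preimage a.continuous) (hA.preimage a.continuous) (preimage_mono hWA)
  · rw [← ENNReal.ofReal_toReal (measure_ne_top _ A)]
    refine ENNReal.ofReal_le_ofReal <| (hμ.regular _ (hA.preimage a.continuous)).2 ?_
    rintro _ ⟨L, hL, hLA, rfl⟩
    obtain ⟨W, hW, hLW, hWA, hWeq⟩ :=
      hsandwich (a '' L) (hL.image a.continuous) (image_subset_iff.2 hLA)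
    calc μ L ≤ μ (a ⁻¹' W) :=
          hμ.le_of_isCompact_subset hL (hW.preimage a.continuous) (image_subset_iff.1 hLW)
      _ = ((hμ.distribFun a).measure W).toReal := by
          rw [hWeq, ENNReal.toReal_ofReal (hμ.nonneg _ (Or.inl (hW.preimage a.continuous)))]
      _ ≤ ((hμ.distribFun a).measure A).toReal :=
          ENNReal.toReal_mono (measure_ne_top _ _) (measure_mono hWA)

theorem distribFun_measure_of_isImage {A : Set ℝ} (hA : IsImage A) :
    (hμ.distribFun a).measure A = ENNReal.ofReal (μ (a ⁻¹' A)) := by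
  rcases hA with hA | hA
  · exact hμ.distribFun_measure_of_isOpen a hA
  have := hμ.isProbabilityMeasure_distribFun a
  have hAc := hμ.add_compl (IsImage.preimage (Or.inr hA) a.continuous)
  rw [← preimage_compl] at hAc
  rw [eq_sub_of_add_eq hAc,
    ENNReal.ofReal_sub _ (hμ.nonneg _ (Or.inl (hA.isOpen_compl.preimage a.continuous))),
    ← hμ.distribFun_measure_of_isOpen a hA.isOpen_compl, ENNReal.ofReal_one,
    ← prob_compl_eq_one_sub hA.measurableSet.compl, compl_compl]

theorem isDistribution_distribFun : IsDistribution μ a (hμ.distribFun a).measure :=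
  ⟨hμ.isProbabilityMeasure_distribFun a, fun _ => hμ.distribFun_measure_of_isImage a⟩

end IsQuasiMeasure

namespace IsDistribution

variable {X : Type*} [TopologicalSpace X] {μ : Set X → ℝ} {a : X →ᵇ ℝ} {ν : Measure ℝ}

theorem qint_eq (hν : IsDistribution μ a ν) : qint μ a = ∫ t, t ∂ν := by
  have hex : ∃ ν' : Measure ℝ, IsProbabilityMeasure ν' ∧
      ∀ A : Set ℝ, IsImage A → ν' A = ENNReal.ofReal (μ (a ⁻¹' A)) :=
    ⟨ν, hν.isProbabilityMeasure, hν.apply_eq⟩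
  obtain ⟨hprob, heq⟩ := hex.choose_spec
  rw [qint, dif_pos hex, Measure.ext_of_Iic hex.choose ν fun t => by
    rw [heq _ (Or.inr isClosed_Iic), hν.apply_eq _ (Or.inr isClosed_Iic)]]

theorem measureReal_eq (hμ : IsQuasiMeasure μ) (hν : IsDistribution μ a ν) {A : Set ℝ}
    (hA : IsImage A) : ν.real A = μ (a ⁻¹' A) := by
  rw [measureReal_def, hν.apply_eq A hA,
    ENNReal.toReal_ofReal (hμ.nonneg _ (hA.preimage a.continuous))]

theorem ae_mem (hμ : IsQuasiMeasure μ) (hν : IsDistribution μ a ν) {A : Set ℝ}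
    (hA : IsImage A) (haA : ∀ x, a x ∈ A) : ∀ᵐ t ∂ν, t ∈ A := by
  rw [ae_iff, ← compl_def, hν.apply_eq _ hA.compl, preimage_compl,
    eq_univ_of_forall (s := a ⁻¹' A) haA, compl_univ, hμ.empty, ENNReal.ofReal_zero]

end IsDistribution

section UnitInterval

variable {ν : Measure ℝ} [IsFiniteMeasure ν]

theorem integrable_id_of_ae_mem_Icc (h : ∀ᵐ t ∂ν, t ∈ Icc (0 : ℝ) 1) :
    Integrable (fun t => t) ν :=
  .of_bound aestronglyMeasurable_id 1 <| h.mono fun t ht => by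
    rw [Real.norm_eq_abs, abs_le]
    exact ⟨by linarith [ht.1], ht.2⟩

theorem measureReal_singleton_one_le_integral (h : ∀ᵐ t ∂ν, t ∈ Icc (0 : ℝ) 1) :
    ν.real {1} ≤ ∫ t, t ∂ν := by
  rw [← integral_indicator_one (measurableSet_singleton 1)]
  refine integral_mono_ae ((integrable_const 1).indicator (measurableSet_singleton 1))
    (integrable_id_of_ae_mem_Icc h) (h.mono fun t ht => ?_)
  by_cases ht1 : t = 1
  · simp [ht1]
  · simp [ht1, ht.1]

theorem integral_le_measureReal_Ioi_zero (h : ∀ᵐ t ∂ν, t ∈ Icc (0 : ℝ) 1) :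
    ∫ t, t ∂ν ≤ ν.real (Ioi 0) := by
  rw [← integral_indicator_one measurableSet_Ioi]
  refine integral_mono_ae (integrable_id_of_ae_mem_Icc h)
    ((integrable_const 1).indicator measurableSet_Ioi) (h.mono fun t ht => ?_)
  rcases ht.1.eq_or_lt with rfl | ht0
  · simp
  · simp [ht0, ht.2]

end UnitInterval

/-- if `K ≤ a ≤ U` then `μ(K) ≤ μ(a) ≤ μ(U)`. -/
theorem quasiIntegral_squeeze {X : Type*} [TopologicalSpace X] [T2Space X]
    (μ : Set X → ℝ) (hμ : IsQuasiMeasure μ) (a : X →ᵇ ℝ) (K U : Set X)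
    (hK : IsCompact K) (hU : IsOpen U)
    (h01 : ∀ x, a x ∈ Set.Icc (0 : ℝ) 1)
    (hK1 : ∀ x ∈ K, a x = 1)
    (hsupp : tsupport (⇑a) ⊆ U) :
    μ K ≤ qint μ a ∧ qint μ a ≤ μ U := by
  set ν := (hμ.distribFun a).measure
  have hν : IsDistribution μ a ν := hμ.isDistribution_distribFun a
  have := hν.isProbabilityMeasure
  have h01ae := hν.ae_mem hμ (Or.inr isClosed_Icc) h01
  rw [hν.qint_eq]
  constructor
  · calc μ K ≤ μ (a ⁻¹' {1}) :=
          hμ.mono_isClosed hK.isClosed (isClosed_singleton.preimage a.continuous) hK1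
      _ = ν.real {1} := (hν.measureReal_eq hμ (Or.inr isClosed_singleton)).symm
      _ ≤ ∫ t, t ∂ν := measureReal_singleton_one_le_integral h01ae
  · calc ∫ t, t ∂ν ≤ ν.real (Ioi 0) := integral_le_measureReal_Ioi_zero h01ae
      _ = μ (a ⁻¹' Ioi 0) := hν.measureReal_eq hμ (Or.inl isOpen_Ioi)
      _ ≤ μ U := hμ.mono_isOpen (isOpen_Ioi.preimage a.continuous) hU
          fun x hx => hsupp (subset_tsupport _ hx.ne')
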